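/- Let f: ℝ^{n} → ℝ be given by f(δ) = Σ_{i=r+1}^n (λδᵢ^p + (1/2)(δᵢ − σᵢ)²) with δᵢ ≥ 0, where each scalar subproblem min_{x≥0} λx^p + (1/2)(x−σᵢ)² has minimizer δᵢ* given by GST. If σ_{r+1} ≥ ... ≥ σₙ ≥ 0, then the vector (δ_{r+1}*, ..., δₙ*) satisfies the ordering constraint δᵢ* ≥ δⱼ* for all i ≤ j, and hence is the global minimizer of f subject to the monotonicity constraints δ_{r+1} ≥ ... ≥ δₙ. -/

import Mathlib

/-!
The GST map `σ ↦ δ(σ)` is nondecreasing: below the threshold `τ` it is `0`, and above it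
`δ(σ)` is the inverse of `x ↦ x + λ p x^(p-1)`, which is strictly increasing beyond the knee
`(2λ(1-p))^(1/(2-p))` since its derivative `1 - λ p (1-p) x^(p-2)` is positive there. Hence
ordered `σᵢ` give equally ordered `δᵢ`, so the coordinatewise minimizer of the separable
objective already satisfies the monotonicity constraints and minimizes over them.
-/

open Set

lemma strictMonoOn_add_mul_rpow_sub_one {p c a : ℝ} (hp : p < 2) (ha : 0 < a)
    (hca : c * (1 - p) ≤ a ^ (2 - p)) :
    StrictMonoOn (fun x : ℝ => x + c * x ^ (p - 1)) (Ici a) := by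
  apply strictMonoOn_of_deriv_pos (convex_Ici a)
  · intro x hx
    have hx0 : x ≠ 0 := (ha.trans_le hx).ne'
    exact (continuousAt_id.add
      ((Real.continuousAt_rpow_const x (p - 1) (Or.inl hx0)).const_mul c)).continuousWithinAt
  · intro x hx
    rw [interior_Ici] at hx
    have hx0 : 0 < x := ha.trans hx
    have hderiv : HasDerivAt (fun x : ℝ => x + c * x ^ (p - 1))
        (1 + c * ((p - 1) * x ^ (p - 1 - 1))) x :=
      (hasDerivAt_id x).add ((Real.hasDerivAt_rpow_const (Or.inl hx0.ne')).const_mul c)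
    rw [hderiv.deriv]
    have hinv : x ^ (p - 1 - 1) * x ^ (2 - p) = 1 := by
      rw [← Real.rpow_add hx0, show p - 1 - 1 + (2 - p) = 0 by ring, Real.rpow_zero]
    have hlt : c * (1 - p) < x ^ (2 - p) :=
      hca.trans_lt (Real.rpow_lt_rpow ha.le hx (by linarith))
    have hpos : 0 < x ^ (p - 1 - 1) := Real.rpow_pos_of_pos hx0 _
    have hcorr : c * (1 - p) * x ^ (p - 1 - 1) < 1 :=
      calc c * (1 - p) * x ^ (p - 1 - 1) < x ^ (2 - p) * x ^ (p - 1 - 1) :=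
            mul_lt_mul_of_pos_right hlt hpos
        _ = 1 := by rw [mul_comm, hinv]
    nlinarith

noncomputable def gstKnee (p l : ℝ) : ℝ := (2 * l * (1 - p)) ^ ((1 : ℝ) / (2 - p))

noncomputable def gstThreshold (p l : ℝ) : ℝ :=
  gstKnee p l + l * p * (2 * l * (1 - p)) ^ ((p - 1) / (2 - p))

def IsGSTSolution (p l σ x : ℝ) : Prop :=
  if σ ≤ gstThreshold p l then x = 0
  else gstKnee p l < x ∧ x + l * p * x ^ (p - 1) = σ

lemma gstKnee_pos {p l : ℝ} (hp1 : p < 1) (hl : 0 < l) : 0 < gstKnee p l :=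
  Real.rpow_pos_of_pos (by nlinarith) _

lemma gstKnee_rpow {p l : ℝ} (hp1 : p < 1) (hl : 0 < l) :
    gstKnee p l ^ (2 - p) = 2 * l * (1 - p) := by
  rw [gstKnee, ← Real.rpow_mul (by nlinarith), one_div,
    inv_mul_cancel₀ (by linarith), Real.rpow_one]

lemma strictMonoOn_gst {p l : ℝ} (hp1 : p < 1) (hl : 0 < l) :
    StrictMonoOn (fun x : ℝ => x + l * p * x ^ (p - 1)) (Ici (gstKnee p l)) :=
  strictMonoOn_add_mul_rpow_sub_one (by linarith) (gstKnee_pos hp1 hl)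
    (by rw [gstKnee_rpow hp1 hl]; nlinarith [mul_pos hl (sub_pos.2 hp1)])

lemma IsGSTSolution.nonneg {p l σ x : ℝ} (hp1 : p < 1) (hl : 0 < l)
    (hx : IsGSTSolution p l σ x) : 0 ≤ x := by
  unfold IsGSTSolution at hx
  split_ifs at hx with hσ
  · exact hx.ge
  · exact (gstKnee_pos hp1 hl).trans hx.1 |>.le

lemma IsGSTSolution.le_of_le {p l σ σ' x y : ℝ} (hp1 : p < 1) (hl : 0 < l)
    (hx : IsGSTSolution p l σ x) (hy : IsGSTSolution p l σ' y) (hσ : σ' ≤ σ) : y ≤ x := by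
  have hx0 := hx.nonneg hp1 hl
  unfold IsGSTSolution at hx hy
  split_ifs at hy with hσ'
  · exact hy ▸ hx0
  · rw [if_neg fun h => hσ' (hσ.trans h)] at hx
    refine (strictMonoOn_gst hp1 hl).le_iff_le hy.1.le hx.1.le |>.mp ?_
    simp only [hx.2, hy.2, hσ]

open Classical in
theorem stmt_16_general (n r : ℕ) (p l : ℝ) (hp1 : p < 1) (hl : 0 < l)
    (σ : Fin n → ℝ)
    (hσord : ∀ i j : Fin n, r ≤ (i : ℕ) → i ≤ j → σ j ≤ σ i)
    (δ : Fin n → ℝ)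
    (hgst : ∀ i : Fin n, r ≤ (i : ℕ) →
      if σ i ≤ (2 * l * (1 - p)) ^ ((1 : ℝ) / (2 - p)) +
          l * p * (2 * l * (1 - p)) ^ ((p - 1) / (2 - p)) then δ i = 0
      else (2 * l * (1 - p)) ^ ((1 : ℝ) / (2 - p)) < δ i ∧
        δ i + l * p * δ i ^ (p - 1) = σ i)
    (hscalar : ∀ i : Fin n, r ≤ (i : ℕ) → ∀ x : ℝ, 0 ≤ x →
      l * δ i ^ p + (1 / 2) * (δ i - σ i) ^ 2 ≤
        l * x ^ p + (1 / 2) * (x - σ i) ^ 2) :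
    (∀ i j : Fin n, r ≤ (i : ℕ) → i ≤ j → δ j ≤ δ i) ∧
    (∀ δ' : Fin n → ℝ, (∀ i, 0 ≤ δ' i) →
      (∀ i j : Fin n, r ≤ (i : ℕ) → i ≤ j → δ' j ≤ δ' i) →
      ∑ i ∈ Finset.univ.filter (fun i : Fin n => r ≤ (i : ℕ)),
          (l * δ i ^ p + (1 / 2) * (δ i - σ i) ^ 2) ≤
        ∑ i ∈ Finset.univ.filter (fun i : Fin n => r ≤ (i : ℕ)),
          (l * δ' i ^ p + (1 / 2) * (δ' i - σ i) ^ 2)) := by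
  have hsol : ∀ i : Fin n, r ≤ (i : ℕ) → IsGSTSolution p l (σ i) (δ i) := hgst
  refine ⟨fun i j hi hij => ?_, fun δ' hδ'0 _ => ?_⟩
  · exact (hsol i hi).le_of_le hp1 hl (hsol j (hi.trans hij)) (hσord i j hi hij)
  · exact Finset.sum_le_sum fun i hi => hscalar i (Finset.mem_filter.mp hi).2 _ (hδ'0 i)

open Classical in
/-- (Theorem 2 of the paper.) Let `σ_{r+1} ≥ ⋯ ≥ σₙ ≥ 0` and let each `δᵢ`
(for `i > r`) be the GST solution of the scalar subproblem
`min_{x ≥ 0} λ x^p + (1/2)(x - σᵢ)²`, i.e. `δᵢ = 0` if `σᵢ ≤ τ` and otherwise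
`δᵢ` is the root of `x + λ p x^(p-1) = σᵢ` beyond `(2λ(1-p))^(1/(2-p))`.
Then the `δᵢ` satisfy the ordering constraints `δᵢ ≥ δⱼ` for `i ≤ j`, and
`δ` is a global minimizer of `f δ' = ∑_{i>r} (λ δ'ᵢ^p + (1/2)(δ'ᵢ - σᵢ)²)`
subject to nonnegativity and monotonicity. -/
theorem stmt_16 (n r : ℕ) (p l : ℝ) (hp : 0 < p) (hp1 : p < 1) (hl : 0 < l)
    (σ : Fin n → ℝ) (hσ0 : ∀ i, 0 ≤ σ i)
    (hσord : ∀ i j : Fin n, r ≤ (i : ℕ) → i ≤ j → σ j ≤ σ i)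
    (δ : Fin n → ℝ)
    (hgst : ∀ i : Fin n, r ≤ (i : ℕ) →
      if σ i ≤ (2 * l * (1 - p)) ^ ((1 : ℝ) / (2 - p)) +
          l * p * (2 * l * (1 - p)) ^ ((p - 1) / (2 - p)) then δ i = 0
      else (2 * l * (1 - p)) ^ ((1 : ℝ) / (2 - p)) < δ i ∧
        δ i + l * p * δ i ^ (p - 1) = σ i)
    (hscalar : ∀ i : Fin n, r ≤ (i : ℕ) → ∀ x : ℝ, 0 ≤ x →
      l * δ i ^ p + (1 / 2) * (δ i - σ i) ^ 2 ≤
        l * x ^ p + (1 / 2) * (x - σ i) ^ 2) :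
    (∀ i j : Fin n, r ≤ (i : ℕ) → i ≤ j → δ j ≤ δ i) ∧
    (∀ δ' : Fin n → ℝ, (∀ i, 0 ≤ δ' i) →
      (∀ i j : Fin n, r ≤ (i : ℕ) → i ≤ j → δ' j ≤ δ' i) →
      ∑ i ∈ Finset.univ.filter (fun i : Fin n => r ≤ (i : ℕ)),
          (l * δ i ^ p + (1 / 2) * (δ i - σ i) ^ 2) ≤
        ∑ i ∈ Finset.univ.filter (fun i : Fin n => r ≤ (i : ℕ)),
          (l * δ' i ^ p + (1 / 2) * (δ' i - σ i) ^ 2)) :=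
  stmt_16_general n r p l hp1 hl σ hσord δ hgst hscalar
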